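/- arXiv:math/0506440 — 2 statements merged into one kernel-verified Lean document; each statement's English description precedes it below -/
import Mathlib

section
/- For pairwise distinct points x₁,…,xₙ in ℝᵈ, the Gaussian interpolation matrix A with entries A_{ij} = exp(−γ‖xᵢ−xⱼ‖²), γ > 0, is positive definite; in particular it is invertible, so the Gaussian RBF interpolation problem has a unique solution. -/
open MeasureTheory Complex
open scoped RealInnerProductSpace

noncomputable section

namespace GaussAux

variable {d : ℕ}

/-- The character `v ↦ exp(I⟪w,v⟫)` as a monoid hom on `Multiplicative V`. -/
def charHom (w : EuclideanSpace ℝ (Fin d)) :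
    Multiplicative (EuclideanSpace ℝ (Fin d)) →* ℂ where
  toFun v := Complex.exp (Complex.I * (⟪w, Multiplicative.toAdd v⟫ : ℝ))
  map_one' := by simp
  map_mul' a b := by
    simp only [toAdd_mul, inner_add_right, ← Complex.exp_add]
    push_cast
    ring_nf

lemma charHom_inj : Function.Injective (charHom (d := d)) := by
  intro w₁ w₂ h
  by_contra hne
  have hw : w₁ - w₂ ≠ 0 := sub_ne_zero.mpr hne
  have hnorm : (0:ℝ) < ‖w₁ - w₂‖ ^ 2 := by have := norm_pos_iff.mpr hw; positivity
  set v : EuclideanSpace ℝ (Fin d) := (Real.pi / ‖w₁ - w₂‖ ^ 2) • (w₁ - w₂) with hv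
  have h1 := congrFun (congrArg (fun f => f.toFun) h) (Multiplicative.ofAdd v)
  simp only [charHom, MonoidHom.coe_mk, OneHom.coe_mk, toAdd_ofAdd] at h1
  have h2 : Complex.exp (Complex.I * (⟪w₁, v⟫ : ℝ)) *
      (Complex.exp (Complex.I * (⟪w₂, v⟫ : ℝ)))⁻¹ = 1 := by
    rw [h1, mul_inv_cancel₀ (Complex.exp_ne_zero _)]
  rw [← Complex.exp_neg, ← Complex.exp_add] at h2
  have h3 : Complex.I * (⟪w₁, v⟫ : ℝ) + -(Complex.I * (⟪w₂, v⟫ : ℝ))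
      = (⟪w₁ - w₂, v⟫ : ℝ) * Complex.I := by
    rw [inner_sub_left]; push_cast; ring
  rw [h3] at h2
  have h4 : ⟪w₁ - w₂, v⟫ = Real.pi := by
    rw [hv, real_inner_smul_right, real_inner_self_eq_norm_sq]
    field_simp
  rw [h4, Complex.exp_pi_mul_I] at h2
  norm_num at h2

end GaussAux

namespace GaussAux

lemma sum_char_eq_zero {n : ℕ} {x : Fin n → EuclideanSpace ℝ (Fin d)}
    (hx : Function.Injective x) {c : Fin n → ℂ}
    (h : ∀ v : EuclideanSpace ℝ (Fin d),
      ∑ k, c k * Complex.exp (Complex.I * (⟪x k, v⟫ : ℝ)) = 0) :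
    c = 0 := by
  have hli :=
    (linearIndependent_monoidHom (Multiplicative (EuclideanSpace ℝ (Fin d))) ℂ).comp
      (fun k => charHom (x k)) (charHom_inj.comp hx)
  funext k
  refine Fintype.linearIndependent_iff.mp hli c ?_ k
  funext v
  have := h (Multiplicative.toAdd v)
  simpa [charHom, Function.comp] using this

end GaussAux

namespace GaussAux

lemma key_integral {b : ℝ} (hb : 0 < b) (w : EuclideanSpace ℝ (Fin d)) :
    ∫ v : EuclideanSpace ℝ (Fin d),
        Complex.exp (-(b:ℂ) * ‖v‖ ^ 2 + Complex.I * (⟪w, v⟫ : ℝ)) =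
      (((Real.pi / b) ^ ((d:ℝ)/2) : ℝ) : ℂ) * ((Real.exp (-(‖w‖^2 / (4*b))) : ℝ) : ℂ) := by
  have h := GaussianFourier.integral_cexp_neg_mul_sq_norm_add_of_euclideanSpace
    (b := (b:ℂ)) (by simpa using hb) Complex.I w
  rw [h]
  congr 1
  · rw [Fintype.card_fin]
    have hπb : (0:ℝ) ≤ Real.pi / b := by positivity
    rw [show (((Real.pi / b) ^ ((d:ℝ)/2) : ℝ) : ℂ) = ((Real.pi / b : ℝ) : ℂ) ^ (((d:ℝ)/2 : ℝ) : ℂ)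
      from Complex.ofReal_cpow hπb _]
    push_cast
    norm_num
  · rw [Complex.I_sq, Complex.ofReal_exp]
    congr 1
    push_cast
    ring

end GaussAux

end

/-- For pairwise distinct points `x 1, …, x n` in `ℝᵈ` and `γ > 0`, the Gaussian
interpolation matrix `A i j = exp (-γ * ‖x i - x j‖²)` is positive definite
(hence invertible, so Gaussian RBF interpolation has a unique solution). -/
theorem gaussian_interpolation_matrix_posDef
    (d n : ℕ) (γ : ℝ) (hγ : 0 < γ)
    (x : Fin n → EuclideanSpace ℝ (Fin d)) (hx : Function.Injective x)
    (A : Matrix (Fin n) (Fin n) ℝ)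
    (hA : ∀ i j, A i j = Real.exp (-γ * ‖x i - x j‖ ^ 2)) :
    A.PosDef ∧ IsUnit A.det := by
  have hherm : A.IsHermitian := by
    ext i j
    simp [Matrix.conjTranspose_apply, hA, norm_sub_rev]
  set b : ℝ := 1/(4*γ) with hbdef
  have hb : 0 < b := by positivity
  set C : ℝ := (Real.pi / b) ^ ((d:ℝ)/2) with hCdef
  have hC : 0 < C := by
    apply Real.rpow_pos_of_pos
    positivity
  set F : Fin n → EuclideanSpace ℝ (Fin d) → ℂ :=
    fun k v => Complex.exp (((-(b/2) * ‖v‖^2 : ℝ) : ℂ) + Complex.I * ((⟪x k, v⟫ : ℝ) : ℂ))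
    with hF
  have hprod : ∀ i j v, F i v * (starRingEnd ℂ) (F j v) =
      Complex.exp (-(b:ℂ) * ‖v‖^2 + Complex.I * ((⟪x i - x j, v⟫ : ℝ) : ℂ)) := by
    intro i j v
    rw [hF, ← Complex.exp_conj, ← Complex.exp_add]
    congr 1
    simp only [map_add, map_mul, Complex.conj_ofReal, Complex.conj_I, inner_sub_left]
    push_cast
    ring
  have hint : ∀ i j, Integrable (fun v => F i v * (starRingEnd ℂ) (F j v)) := by
    intro i j
    simp_rw [hprod]
    exact GaussianFourier.integrable_cexp_neg_mul_sq_norm_add (by simpa using hb) _ _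
  have hkey : ∀ i j, (∫ v, F i v * (starRingEnd ℂ) (F j v)) = ((C * A i j : ℝ) : ℂ) := by
    intro i j
    simp_rw [hprod]
    rw [GaussAux.key_integral hb, hA]
    rw [show -(‖x i - x j‖^2 / (4*b)) = -γ * ‖x i - x j‖^2 by rw [hbdef]; field_simp]
    push_cast
    ring
  have hpos : ∀ lam : Fin n → ℝ, lam ≠ 0 → 0 < dotProduct lam (A.mulVec lam) := by
    intro lam hlam
    set S : EuclideanSpace ℝ (Fin d) → ℂ := fun v => ∑ k, (lam k : ℂ) * F k v with hS
    have hSexp : ∀ v, S v * (starRingEnd ℂ) (S v) =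
        ∑ i, ∑ j, ((lam i : ℂ) * (lam j : ℂ)) * (F i v * (starRingEnd ℂ) (F j v)) := by
      intro v
      rw [hS, map_sum, Finset.sum_mul_sum]
      refine Finset.sum_congr rfl fun i _ => Finset.sum_congr rfl fun j _ => ?_
      simp only [map_mul, Complex.conj_ofReal]
      ring
    have hintS : Integrable (fun v => S v * (starRingEnd ℂ) (S v)) := by
      simp_rw [hSexp]
      exact integrable_finset_sum _ fun i _ =>
        integrable_finset_sum _ fun j _ => (hint i j).const_mul _
    have hIS : (∫ v, S v * (starRingEnd ℂ) (S v)) =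
        ((C * dotProduct lam (A.mulVec lam) : ℝ) : ℂ) := by
      simp_rw [hSexp]
      rw [integral_finset_sum _ fun i _ =>
        integrable_finset_sum _ fun j _ => (hint i j).const_mul _]
      have : ∀ i, (∫ v, ∑ j, ((lam i : ℂ) * (lam j : ℂ)) * (F i v * (starRingEnd ℂ) (F j v)))
          = ∑ j, ((lam i : ℂ) * (lam j : ℂ)) * ((C * A i j : ℝ) : ℂ) := by
        intro i
        rw [integral_finset_sum _ fun j _ => (hint i j).const_mul _]
        refine Finset.sum_congr rfl fun j _ => ?_
        rw [MeasureTheory.integral_const_mul, hkey]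
      simp_rw [this]
      simp only [dotProduct, Matrix.mulVec]
      push_cast [Finset.mul_sum]
      refine Finset.sum_congr rfl fun i _ => Finset.sum_congr rfl fun j _ => ?_
      ring
    have hnormSq : ∀ v, S v * (starRingEnd ℂ) (S v) = ((Complex.normSq (S v) : ℝ) : ℂ) :=
      fun v => Complex.mul_conj (S v)
    have hIR : (∫ v, Complex.normSq (S v)) = C * dotProduct lam (A.mulVec lam) := by
      have h5 : (∫ v, Complex.normSq (S v))
          = RCLike.re (∫ v, S v * (starRingEnd ℂ) (S v)) := by
        rw [← integral_re hintS]
        congr 1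
        funext v
        rw [hnormSq v]
        simp
      rw [h5, hIS]
      simp
    have hfint : Integrable (fun v => Complex.normSq (S v)) := by
      have h2 := hintS.re
      refine h2.congr (Filter.Eventually.of_forall fun v => ?_)
      rw [show (fun x => RCLike.re (S x * (starRingEnd ℂ) (S x))) v
        = RCLike.re (S v * (starRingEnd ℂ) (S v)) from rfl, hnormSq v]
      simp
    have hScont : Continuous S := by
      refine continuous_finset_sum _ fun k _ => continuous_const.mul ?_
      refine Complex.continuous_exp.comp ?_
      apply Continuous.add
      · exact Complex.continuous_ofReal.comp (continuous_const.mul (continuous_norm.pow 2))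
      · exact continuous_const.mul
          (Complex.continuous_ofReal.comp (Continuous.inner continuous_const continuous_id))
    have hexists : ∃ v, S v ≠ 0 := by
      by_contra hcon
      push_neg at hcon
      have hz : (fun k => (lam k : ℂ)) = 0 := by
        apply GaussAux.sum_char_eq_zero hx
        intro v
        calc ∑ k, (lam k : ℂ) * Complex.exp (Complex.I * ((⟪x k, v⟫ : ℝ) : ℂ))
            = Complex.exp (-(((-(b/2) * ‖v‖^2 : ℝ)) : ℂ)) * S v := by
              rw [hS, Finset.mul_sum]
              refine Finset.sum_congr rfl fun k _ => ?_
              rw [hF, mul_left_comm, ← Complex.exp_add, neg_add_cancel_left]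
          _ = 0 := by rw [hcon v, mul_zero]
      apply hlam
      funext k
      have h3 := congrFun hz k
      rw [Pi.zero_apply] at h3
      exact_mod_cast h3
    have hintpos : 0 < ∫ v, Complex.normSq (S v) := by
      rw [MeasureTheory.integral_pos_iff_support_of_nonneg
        (fun v => Complex.normSq_nonneg (S v)) hfint]
      obtain ⟨v0, hv0⟩ := hexists
      have hopen : IsOpen (Function.support fun v => Complex.normSq (S v)) := by
        have : Continuous fun v => Complex.normSq (S v) := Complex.continuous_normSq.comp hScont
        exact isOpen_compl_singleton.preimage this
      refine hopen.measure_pos volume ⟨v0, ?_⟩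
      simp only [Function.mem_support]
      exact fun h => hv0 (Complex.normSq_eq_zero.mp h)
    nlinarith [hIR, hC, hintpos]
  have hPD : A.PosDef := Matrix.posDef_iff_dotProduct_mulVec.mpr ⟨hherm, fun lam hlam => by simpa using hpos lam hlam⟩
  exact ⟨hPD, hPD.det_pos.ne'.isUnit⟩
end

section
/- For pairwise distinct points x₁,…,xₙ in ℝᵈ, given any target values f₁,…,fₙ ∈ ℝ, there exists a unique function of the form s(x) = Σᵢ λᵢ exp(−γ‖x−xᵢ‖²) with s(xⱼ) = fⱼ for all j. -/
open Real MeasureTheory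
open scoped RealInnerProductSpace

section aux
variable {d : ℕ}

lemma rbf_exp_ident (γ : ℝ) (u w v : EuclideanSpace ℝ (Fin d)) :
    (-(2*γ))*‖v-u‖^2 + (-(2*γ))*‖v-w‖^2
      = (-(4*γ))*‖v - (2⁻¹:ℝ)•(u+w)‖^2 + (-γ)*‖u-w‖^2 := by
  have hpar := parallelogram_law_with_norm ℝ (v-u) (v-w)
  have h1 : (v-u) + (v-w) = (2:ℝ)•(v - (2⁻¹:ℝ)•(u+w)) := by module
  have h2 : (v-u) - (v-w) = w - u := by abel
  rw [h1, h2, norm_smul, norm_sub_rev w u] at hpar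
  simp only [Real.norm_ofNat, mul_pow] at hpar
  linear_combination γ * hpar


lemma rbf_base_integrable {γ : ℝ} (hγ : 0 < γ) (m : EuclideanSpace ℝ (Fin d)) :
    Integrable (fun v : EuclideanSpace ℝ (Fin d) => rexp ((-(4*γ))*‖v - m‖^2)) := by
  have base : Integrable (fun v : EuclideanSpace ℝ (Fin d) => rexp ((-(4*γ))*‖v‖^2)) := by
    have h := (GaussianFourier.integrable_cexp_neg_mul_sq_norm_add (V := EuclideanSpace ℝ (Fin d))
      (b := (4*γ : ℂ)) (by simpa using by positivity) 0 0).norm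
    convert h using 2 with v
    simp [Complex.norm_exp]
    left; norm_cast
  exact base.comp_sub_right m

lemma rbf_gram_integrable {γ : ℝ} (hγ : 0 < γ) (u w : EuclideanSpace ℝ (Fin d)) :
    Integrable (fun v : EuclideanSpace ℝ (Fin d) =>
      rexp ((-(2*γ))*‖v-u‖^2) * rexp ((-(2*γ))*‖v-w‖^2)) := by
  have : (fun v : EuclideanSpace ℝ (Fin d) =>
      rexp ((-(2*γ))*‖v-u‖^2) * rexp ((-(2*γ))*‖v-w‖^2))
      = fun v => rexp ((-(4*γ))*‖v - (2⁻¹:ℝ)•(u+w)‖^2) * rexp ((-γ)*‖u-w‖^2) := by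
    funext v
    rw [← Real.exp_add, ← Real.exp_add, rbf_exp_ident γ u w v]
  rw [this]
  exact (rbf_base_integrable hγ _).mul_const _

lemma rbf_gram_integral {γ : ℝ} (hγ : 0 < γ) (u w : EuclideanSpace ℝ (Fin d)) :
    ∫ v : EuclideanSpace ℝ (Fin d), rexp ((-(2*γ))*‖v-u‖^2) * rexp ((-(2*γ))*‖v-w‖^2)
      = (π/(4*γ))^((d:ℝ)/2) * rexp ((-γ)*‖u-w‖^2) := by
  have h0 : ∀ v : EuclideanSpace ℝ (Fin d),
      rexp ((-(2*γ))*‖v-u‖^2) * rexp ((-(2*γ))*‖v-w‖^2)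
        = rexp ((-(4*γ))*‖v - (2⁻¹:ℝ)•(u+w)‖^2) * rexp ((-γ)*‖u-w‖^2) := by
    intro v
    rw [← Real.exp_add, ← Real.exp_add, rbf_exp_ident γ u w v]
  simp_rw [h0]
  rw [integral_mul_const,
    integral_sub_right_eq_self (fun v : EuclideanSpace ℝ (Fin d) => rexp ((-(4*γ))*‖v‖^2))
      ((2⁻¹:ℝ)•(u+w))]
  have h4γ : (0:ℝ) < 4*γ := by positivity
  rw [GaussianFourier.integral_rexp_neg_mul_sq_norm h4γ]
  simp [finrank_euclideanSpace_fin]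

lemma rbf_li {γ : ℝ} (hγ : 0 < γ) {n : ℕ} (x : Fin n → EuclideanSpace ℝ (Fin d))
    (hx : Function.Injective x) (lam : Fin n → ℝ)
    (h : ∀ v : EuclideanSpace ℝ (Fin d), ∑ i, lam i * rexp ((-(2*γ))*‖v - x i‖^2) = 0) :
    lam = 0 := by
  classical
  let χ : EuclideanSpace ℝ (Fin d) → (Multiplicative (EuclideanSpace ℝ (Fin d)) →* ℝ) :=
    fun c =>
    { toFun := fun v => rexp ((4*γ) * ⟪c, Multiplicative.toAdd v⟫)
      map_one' := by simp
      map_mul' := fun a b => by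
        simp only [toAdd_mul, inner_add_right, mul_add, Real.exp_add] }
  have hχapp : ∀ c v, χ c (Multiplicative.ofAdd v) = rexp ((4*γ) * ⟪c, v⟫) := fun _ _ => rfl
  have hχ : Function.Injective χ := by
    intro a b hab
    have h1 : rexp ((4*γ)*⟪a, a-b⟫) = rexp ((4*γ)*⟪b, a-b⟫) :=
      congrArg (fun φ : Multiplicative (EuclideanSpace ℝ (Fin d)) →* ℝ =>
        φ (Multiplicative.ofAdd (a-b))) hab
    rw [Real.exp_eq_exp] at h1
    have h2 := mul_left_cancel₀ (by positivity : (4*γ:ℝ) ≠ 0) h1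
    have h3 : ⟪a - b, a - b⟫ = 0 := by
      rw [inner_sub_left, h2, sub_self]
    rw [inner_self_eq_zero, sub_eq_zero] at h3
    exact h3
  have li := (linearIndependent_monoidHom (Multiplicative (EuclideanSpace ℝ (Fin d))) ℝ).comp
      (fun i => χ (x i)) (hχ.comp hx)
  rw [Fintype.linearIndependent_iff] at li
  have key : ∀ v : Multiplicative (EuclideanSpace ℝ (Fin d)),
      ∑ i, (lam i * rexp ((-(2*γ))*‖x i‖^2)) * χ (x i) v = 0 := by
    intro v
    set w := Multiplicative.toAdd v with hw
    have hv := h w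
    have expand : ∀ i, lam i * rexp ((-(2*γ))*‖w - x i‖^2)
        = rexp ((-(2*γ))*‖w‖^2) * ((lam i * rexp ((-(2*γ))*‖x i‖^2)) * χ (x i) v) := by
      intro i
      have hχi : χ (x i) v = rexp ((4*γ) * ⟪w, x i⟫) := by
        rw [real_inner_comm]; rfl
      have hnorm : ‖w - x i‖^2 = ‖w‖^2 - 2*⟪w, x i⟫ + ‖x i‖^2 := by
        rw [@norm_sub_sq_real]
      rw [hχi, hnorm]
      rw [show (-(2*γ))*(‖w‖^2 - 2*⟪w, x i⟫ + ‖x i‖^2)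
        = (-(2*γ))*‖w‖^2 + ((-(2*γ))*‖x i‖^2 + (4*γ)*⟪w, x i⟫) by ring]
      rw [Real.exp_add, Real.exp_add]
      ring
    simp_rw [expand] at hv
    rw [← Finset.mul_sum] at hv
    exact (mul_eq_zero.mp hv).resolve_left (Real.exp_ne_zero _)
  have hsum : ∑ i, (lam i * rexp ((-(2*γ))*‖x i‖^2)) •
      (((fun f : Multiplicative (EuclideanSpace ℝ (Fin d)) →* ℝ => (f : Multiplicative (EuclideanSpace ℝ (Fin d)) → ℝ)) ∘ fun i => χ (x i)) i) = 0 := by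
    funext v
    have := key v
    simpa [Finset.sum_apply] using this
  have hall := li _ hsum
  funext i
  have hi := hall i
  rcases mul_eq_zero.mp hi with h' | h'
  · exact h'
  · exact absurd h' (Real.exp_ne_zero _)

end aux

/-- For pairwise distinct points `x 1, …, x n` in `ℝᵈ`, `γ > 0`, and target values
`f 1, …, f n`, there exists a unique Gaussian RBF interpolant
`s x = ∑ i, λ i * exp (-γ * ‖x - x i‖²)` with `s (x j) = f j` for all `j`. -/
theorem gaussian_rbf_interpolation_existsUnique
    (d n : ℕ) (γ : ℝ) (hγ : 0 < γ)
    (x : Fin n → EuclideanSpace ℝ (Fin d)) (hx : Function.Injective x)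
    (f : Fin n → ℝ) :
    ∃! lam : Fin n → ℝ,
      ∀ j, (∑ i, lam i * Real.exp (-γ * ‖x j - x i‖ ^ 2)) = f j := by
  classical
  set K : Matrix (Fin n) (Fin n) ℝ := Matrix.of fun j i => rexp (-γ * ‖x j - x i‖^2) with hK
  have hinj : Function.Injective K.mulVecLin := by
    rw [injective_iff_map_eq_zero]
    intro lam hlam
    set g : Fin n → EuclideanSpace ℝ (Fin d) → ℝ :=
      fun i v => rexp ((-(2*γ))*‖v - x i‖^2) with hg
    set s : EuclideanSpace ℝ (Fin d) → ℝ := fun v => ∑ i, lam i * g i v with hs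
    have hint_pair : ∀ i j,
        Integrable (fun v : EuclideanSpace ℝ (Fin d) => (lam i * g i v) * (lam j * g j v)) := by
      intro i j
      have h1 := (rbf_gram_integrable hγ (x i) (x j)).const_mul (lam i * lam j)
      convert h1 using 2 with v
      · rfl
      simp only [hg]; ring
    have hint_i : ∀ i, Integrable (fun v : EuclideanSpace ℝ (Fin d) =>
        ∑ j, (lam i * g i v) * (lam j * g j v)) :=
      fun i => integrable_finset_sum _ (fun j _ => hint_pair i j)
    have hexpand : (fun v => s v * s v)
        = fun v : EuclideanSpace ℝ (Fin d) => ∑ i, ∑ j, (lam i * g i v) * (lam j * g j v) := by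
      funext v
      rw [hs, Finset.sum_mul_sum]
    have hss : Integrable (fun v : EuclideanSpace ℝ (Fin d) => s v * s v) := by
      rw [hexpand]; exact integrable_finset_sum _ (fun i _ => hint_i i)
    set C : ℝ := (π/(4*γ))^((d:ℝ)/2) with hC
    have hCpos : 0 < C := Real.rpow_pos_of_pos (by positivity) _
    have hI : ∫ v : EuclideanSpace ℝ (Fin d), s v * s v
        = C * ∑ i, ∑ j, (lam i * lam j) * rexp (-γ*‖x i - x j‖^2) := by
      rw [hexpand, integral_finset_sum _ (fun i _ => hint_i i)]
      rw [Finset.mul_sum]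
      refine Finset.sum_congr rfl fun i _ => ?_
      rw [integral_finset_sum _ (fun j _ => hint_pair i j), Finset.mul_sum]
      refine Finset.sum_congr rfl fun j _ => ?_
      rw [show (fun v : EuclideanSpace ℝ (Fin d) => (lam i * g i v)*(lam j * g j v))
        = fun v => (lam i * lam j) * (g i v * g j v) from funext fun v => by ring]
      rw [MeasureTheory.integral_const_mul]
      simp only [hg]
      rw [rbf_gram_integral hγ (x i) (x j)]
      ring
    have hq : ∑ i, ∑ j, (lam i * lam j) * rexp (-γ*‖x i - x j‖^2) = 0 := by
      have h0 : ∀ i, K.mulVec lam i = 0 := by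
        intro i
        have := congrFun hlam i
        simpa [Matrix.mulVecLin_apply] using this
      calc ∑ i, ∑ j, (lam i * lam j) * rexp (-γ*‖x i - x j‖^2)
          = ∑ i, lam i * K.mulVec lam i := by
            refine Finset.sum_congr rfl fun i _ => ?_
            rw [Matrix.mulVec, dotProduct, Finset.mul_sum]
            refine Finset.sum_congr rfl fun j _ => ?_
            simp only [hK, Matrix.of_apply]
            ring
        _ = 0 := by simp [h0]
    have hI0 : ∫ v : EuclideanSpace ℝ (Fin d), s v * s v = 0 := by
      rw [hI, hq, mul_zero]
    have hae : (fun v : EuclideanSpace ℝ (Fin d) => s v * s v) =ᵐ[volume] 0 := by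
      rw [← MeasureTheory.integral_eq_zero_iff_of_nonneg
        (fun v => mul_self_nonneg (s v)) hss]
      exact hI0
    have hcont : Continuous s := by
      refine continuous_finset_sum _ fun i _ => Continuous.mul continuous_const ?_
      exact Real.continuous_exp.comp
        (continuous_const.mul ((continuous_id.sub continuous_const).norm.pow 2))
    have hseq : (fun v : EuclideanSpace ℝ (Fin d) => s v * s v) = 0 :=
      (Continuous.ae_eq_iff_eq volume (hcont.mul hcont) continuous_const).mp hae
    have hs0 : ∀ v, s v = 0 := fun v => mul_self_eq_zero.mp (congrFun hseq v)
    exact rbf_li hγ x hx lam hs0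
  have hsurj := LinearMap.injective_iff_surjective.mp hinj
  obtain ⟨lam, hlam⟩ := hsurj f
  have hform : ∀ lam' : Fin n → ℝ, ∀ j,
      (∑ i, lam' i * Real.exp (-γ * ‖x j - x i‖ ^ 2)) = K.mulVecLin lam' j := by
    intro lam' j
    simp only [Matrix.mulVecLin_apply, Matrix.mulVec, dotProduct, hK, Matrix.of_apply]
    exact Finset.sum_congr rfl fun i _ => mul_comm _ _
  refine ⟨lam, ?_, ?_⟩
  · intro j
    rw [hform lam j, hlam]
  · intro lam' hlam'
    apply hinj
    rw [hlam]
    funext j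
    rw [← hform lam' j, hlam' j]
end
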